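/- arXiv:1901.00114 — 2 statements merged into one kernel-verified Lean document; each statement's English description precedes it below -/
import Mathlib

section
/- Let (Ω, ℱ, ℙ) be a probability space, α ∈ (0,1), Z : ℝ → Ω → ℝ (the random loss as a function of a real parameter θ), and ν : ℝ → ℝ (the value-at-risk level as a function of θ). Fix θ₀ ∈ ℝ and assume: (i) ν is differentiable at θ₀ with derivative ν'(θ₀); (ii) for every θ in a neighborhood of θ₀, ℙ(Z θ ≥ ν θ) = 1 − α; (iii) ℙ(Z θ₀ = ν θ₀) = 0; (iv) for ℙ-almost every ω, the map θ ↦ Z θ ω is differentiable at θ₀ with derivative Z'(θ₀, ω), and there is an integrable function K : Ω → ℝ and a neighborhood U of θ₀ such that |Z θ ω − Z θ' ω| ≤ K(ω)|θ − θ'| for all θ, θ' ∈ U and a.e. ω; (v) for each θ near θ₀, Z θ and (Z θ − ν θ)⁺ are integrable. Then the function C(θ) = ν θ + (1/(1−α))·E[(Z θ − ν θ)⁺] (the CVaR at level α) is differentiable at θ₀ and C'(θ₀) = (1/(1−α)) · ∫_{{ω : Z θ₀ ω ≥ ν θ₀}} Z'(θ₀, ω) dℙ(ω), i.e. the derivative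 of the CVaR equals the conditional expectation E[Z'(θ₀) | Z θ₀ ≥ ν θ₀] of the derivative of the loss over the α-tail event. -/
/-!
For almost every `ω` the kink of `θ ↦ (Z θ ω - ν θ)⁺` is not at `θ₀`, since `ℙ(Z θ₀ = ν θ₀) = 0`,
so this map is differentiable at `θ₀` with derivative `1_{Z θ₀ ≥ ν θ₀} (Z' - ν')`. The
integrable Lipschitz bound lets us differentiate `E[(Z θ - ν θ)⁺]` under the integral sign, and
the terms in `ν'` cancel because the tail event has probability exactly `1 - α`:
`ν' + (1 - α)⁻¹ (∫_{Z θ₀ ≥ ν θ₀} Z' - (1 - α) ν') = (1 - α)⁻¹ ∫_{Z θ₀ ≥ ν θ₀} Z'`.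
-/

open MeasureTheory Filter Topology

theorem HasDerivAt.max_zero_of_ne {u : ℝ → ℝ} {u' x : ℝ} (hu : HasDerivAt u u' x)
    (hx : u x ≠ 0) : HasDerivAt (fun t => max (u t) 0) (if 0 ≤ u x then u' else 0) x := by
  rcases hx.lt_or_gt with hneg | hpos
  · rw [if_neg hneg.not_ge]
    refine (hasDerivAt_const x 0).congr_of_eventuallyEq ?_
    filter_upwards [hu.continuousAt.eventually (gt_mem_nhds hneg)] with t ht
    exact max_eq_right ht.le
  · rw [if_pos hpos.le]
    refine hu.congr_of_eventuallyEq ?_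
    filter_upwards [hu.continuousAt.eventually (lt_mem_nhds hpos)] with t ht
    exact max_eq_left ht.le

section ParametricIntegral

variable {Ω : Type*} [MeasurableSpace Ω] {μ : Measure Ω} {E : Type*} [NormedAddCommGroup E]

theorem aestronglyMeasurable_of_hasDerivAt_ae {𝕜 : Type*} [NontriviallyNormedField 𝕜]
    [NormedSpace 𝕜 E] {F : 𝕜 → Ω → E} {F' : Ω → E} {x₀ : 𝕜}
    (hF_meas : ∀ᶠ x in 𝓝 x₀, AEStronglyMeasurable (F x) μ)
    (h_diff : ∀ᵐ ω ∂μ, HasDerivAt (F · ω) (F' ω) x₀) : AEStronglyMeasurable F' μ := by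
  have h_closure : x₀ ∈ closure ({x | AEStronglyMeasurable (F x) μ} \ {x₀}) :=
    mem_closure_iff_frequently.2
      (Eventually.frequently (f := 𝓝[≠] x₀) (sdiff_mem_nhdsWithin_compl hF_meas {x₀})
        |>.filter_mono nhdsWithin_le_nhds)
  obtain ⟨x, hx_mem, hx_lim⟩ := mem_closure_iff_seq_limit.1 h_closure
  have hx_lim' : Tendsto x atTop (𝓝[≠] x₀) :=
    tendsto_nhdsWithin_iff.2 ⟨hx_lim, .of_forall fun n => (hx_mem n).2⟩
  refine aestronglyMeasurable_of_tendsto_ae atTop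
    (f := fun n ω => slope (F · ω) x₀ (x n)) (fun n => ?_) ?_
  · simp only [slope_def_module]
    exact ((hx_mem n).1.sub hF_meas.self_of_nhds).const_smul _
  · filter_upwards [h_diff] with ω hω
    exact (hasDerivAt_iff_tendsto_slope.1 hω).comp hx_lim'

theorem hasDerivAt_integral_of_dominated_loc_of_lip' {𝕜 : Type*} [RCLike 𝕜] [NormedSpace ℝ E]
    [NormedSpace 𝕜 E] {F : 𝕜 → Ω → E} {F' : Ω → E} {x₀ : 𝕜} {s : Set 𝕜} {bound : Ω → ℝ}
    (hs : s ∈ 𝓝 x₀) (hF_meas : ∀ x ∈ s, AEStronglyMeasurable (F x) μ)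
    (hF_int : Integrable (F x₀) μ) (hF'_meas : AEStronglyMeasurable F' μ)
    (h_lipsch : ∀ᵐ ω ∂μ, ∀ x ∈ s, ‖F x ω - F x₀ ω‖ ≤ bound ω * ‖x - x₀‖)
    (bound_integrable : Integrable bound μ)
    (h_diff : ∀ᵐ ω ∂μ, HasDerivAt (F · ω) (F' ω) x₀) :
    Integrable F' μ ∧ HasDerivAt (fun x => ∫ ω, F x ω ∂μ) (∫ ω, F' ω ∂μ) x₀ := by
  set L : E →L[𝕜] 𝕜 →L[𝕜] E := ContinuousLinearMap.smulRightL 𝕜 𝕜 E 1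
  have hm : AEStronglyMeasurable (L ∘ F') μ := L.continuous.comp_aestronglyMeasurable hF'_meas
  obtain ⟨hLF'_int, key⟩ := hasFDerivAt_integral_of_dominated_loc_of_lip' hs hF_meas hF_int hm
    h_lipsch bound_integrable (h_diff.mono fun _ h => h.hasFDerivAt)
  have hF'_int : Integrable F' μ := by
    rw [← integrable_norm_iff hm] at hLF'_int
    simpa [L, (· ∘ ·), integrable_norm_iff hF'_meas] using! hLF'_int
  refine ⟨hF'_int, ?_⟩
  by_cases hE : CompleteSpace E; swap
  -- the Bochner integral into an incomplete space is `0`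
  · simpa [integral, hE] using! hasDerivAt_const x₀ 0
  rw [hasDerivAt_iff_hasFDerivAt]
  simpa only [(· ∘ ·), ContinuousLinearMap.integral_comp_comm _ hF'_int] using! key

theorem hasDerivAt_integral_max_zero {Y : ℝ → Ω → ℝ} {Y' K : Ω → ℝ} {θ₀ : ℝ} {U : Set ℝ}
    (hY_meas : ∀ᶠ θ in 𝓝 θ₀, AEStronglyMeasurable (Y θ) μ)
    (hY_int : Integrable (fun ω => max (Y θ₀ ω) 0) μ)
    (hU : U ∈ 𝓝 θ₀) (hK : Integrable K μ)
    (hlip : ∀ᵐ ω ∂μ, ∀ θ ∈ U, |Y θ ω - Y θ₀ ω| ≤ K ω * |θ - θ₀|)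
    (hderiv : ∀ᵐ ω ∂μ, HasDerivAt (Y · ω) (Y' ω) θ₀)
    (hne : ∀ᵐ ω ∂μ, Y θ₀ ω ≠ 0) :
    IntegrableOn Y' {ω | 0 ≤ Y θ₀ ω} μ ∧
      HasDerivAt (fun θ => ∫ ω, max (Y θ ω) 0 ∂μ) (∫ ω in {ω | 0 ≤ Y θ₀ ω}, Y' ω ∂μ) θ₀ := by
  set S := {ω | 0 ≤ Y θ₀ ω}
  have hS : NullMeasurableSet S μ :=
    nullMeasurableSet_le aemeasurable_const hY_meas.self_of_nhds.aemeasurable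
  have hF'_meas : AEStronglyMeasurable (S.indicator Y') μ :=
    (aestronglyMeasurable_of_hasDerivAt_ae hY_meas hderiv).indicator₀ hS
  have h_diff : ∀ᵐ ω ∂μ, HasDerivAt (fun θ => max (Y θ ω) 0) (S.indicator Y' ω) θ₀ := by
    filter_upwards [hderiv, hne] with ω hω hω_ne
    simpa only [Set.indicator_apply, S, Set.mem_ofPred_eq] using hω.max_zero_of_ne hω_ne
  have h_lipsch : ∀ᵐ ω ∂μ, ∀ θ ∈ U ∩ {θ | AEStronglyMeasurable (Y θ) μ},
      ‖max (Y θ ω) 0 - max (Y θ₀ ω) 0‖ ≤ K ω * ‖θ - θ₀‖ := by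
    filter_upwards [hlip] with ω hω θ hθ
    exact (abs_max_sub_max_le_abs _ _ _).trans (hω θ hθ.1)
  obtain ⟨hF'_int, hF_deriv⟩ := hasDerivAt_integral_of_dominated_loc_of_lip'
    (inter_mem hU hY_meas) (fun θ hθ => hθ.2.sup aestronglyMeasurable_const) hY_int hF'_meas
    h_lipsch hK h_diff
  refine ⟨hF'_int.restrict.congr ?_, by rwa [← integral_indicator₀ hS]⟩
  filter_upwards [ae_restrict_mem₀ hS] with ω hω
  exact Set.indicator_of_mem hω Y'

end ParametricIntegral

/-- **CVaR gradient theorem (scalar parameter).**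
If `ν` is differentiable at `θ₀`, `ℙ(Z θ ≥ ν θ) = 1 - α` near `θ₀`,
`ℙ(Z θ₀ = ν θ₀) = 0`, the loss `θ ↦ Z θ ω` is a.s. differentiable at `θ₀` with
derivative `Z' ω` and a.s. locally Lipschitz with integrable constant, and the
relevant integrability holds, then the CVaR
`C θ = ν θ + (1/(1-α)) E[(Z θ - ν θ)⁺]` is differentiable at `θ₀` with
derivative `(1/(1-α)) ∫_{Z θ₀ ≥ ν θ₀} Z' dℙ`. -/
theorem cvar_hasDerivAt
    {Ω : Type*} [MeasurableSpace Ω] (ℙ : Measure Ω) [IsProbabilityMeasure ℙ]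
    (α : ℝ) (hα : α ∈ Set.Ioo (0 : ℝ) 1)
    (Z : ℝ → Ω → ℝ) (ν : ℝ → ℝ) (θ₀ ν' : ℝ) (Z' : Ω → ℝ)
    (hν : HasDerivAt ν ν' θ₀)
    (htail : ∀ᶠ θ in nhds θ₀, ℙ {ω | Z θ ω ≥ ν θ} = ENNReal.ofReal (1 - α))
    (hzero : ℙ {ω | Z θ₀ ω = ν θ₀} = 0)
    (hderiv : ∀ᵐ ω ∂ℙ, HasDerivAt (fun θ => Z θ ω) (Z' ω) θ₀)
    (hlip : ∃ K : Ω → ℝ, Integrable K ℙ ∧ ∃ U ∈ nhds θ₀,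
      ∀ᵐ ω ∂ℙ, ∀ θ ∈ U, ∀ θ' ∈ U, |Z θ ω - Z θ' ω| ≤ K ω * |θ - θ'|)
    (hint : ∀ᶠ θ in nhds θ₀,
      Integrable (Z θ) ℙ ∧ Integrable (fun ω => max (Z θ ω - ν θ) 0) ℙ) :
    HasDerivAt
      (fun θ => ν θ + (1 - α)⁻¹ * ∫ ω, max (Z θ ω - ν θ) 0 ∂ℙ)
      ((1 - α)⁻¹ * ∫ ω in {ω | Z θ₀ ω ≥ ν θ₀}, Z' ω ∂ℙ) θ₀ := by
  simp only [ge_iff_le] at htail ⊢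
  obtain ⟨K, hK, U, hU, hZ_lip⟩ := hlip
  obtain ⟨c, hν_lip⟩ := hν.isBigO_sub.bound
  have h_lip : ∀ᵐ ω ∂ℙ, ∀ θ ∈ U ∩ {θ | ‖ν θ - ν θ₀‖ ≤ c * ‖θ - θ₀‖},
      |(Z θ ω - ν θ) - (Z θ₀ ω - ν θ₀)| ≤ (K ω + c) * |θ - θ₀| := by
    filter_upwards [hZ_lip] with ω hω θ ⟨hθU, hθν⟩
    have hZ := hω θ hθU θ₀ (mem_of_mem_nhds hU)
    replace hθν : |ν θ - ν θ₀| ≤ c * |θ - θ₀| := hθν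
    calc |(Z θ ω - ν θ) - (Z θ₀ ω - ν θ₀)| ≤ |Z θ ω - Z θ₀ ω| + |ν θ - ν θ₀| := by
          rw [sub_sub_sub_comm]; exact abs_sub _ _
      _ ≤ (K ω + c) * |θ - θ₀| := by linarith
  have h_ne : ∀ᵐ ω ∂ℙ, Z θ₀ ω - ν θ₀ ≠ 0 := by
    simpa [ae_iff, sub_eq_zero] using hzero
  obtain ⟨hZ'_int, h_deriv⟩ := hasDerivAt_integral_max_zero (Y := fun θ ω => Z θ ω - ν θ)
    (hint.mono fun θ h => h.1.aestronglyMeasurable.sub aestronglyMeasurable_const)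
    hint.self_of_nhds.2 (inter_mem hU hν_lip) (hK.add (integrable_const c)) h_lip
    (hderiv.mono fun ω h => h.sub hν) h_ne
  simp only [sub_nonneg] at hZ'_int h_deriv
  have h_tail : ℙ.real {ω | ν θ₀ ≤ Z θ₀ ω} = 1 - α := by
    rw [measureReal_def, htail.self_of_nhds, ENNReal.toReal_ofReal (by linarith [hα.2])]
  refine (hν.add (h_deriv.const_mul (1 - α)⁻¹)).congr_deriv ?_
  rw [integral_sub ((hZ'_int.add (integrable_const ν')).congr
      (.of_forall fun ω => sub_add_cancel (Z' ω) ν')) (integrable_const ν'),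
    setIntegral_const, h_tail, smul_eq_mul]
  field_simp [(sub_pos.2 hα.2).ne']
  ring
end

section
/- Let (Ω, ℱ, ℙ) be a probability space, α ∈ (0,1), n a positive integer, Z : ℝⁿ → Ω → ℝ (the random loss as a function of a parameter vector θ ∈ ℝⁿ), and ν : ℝⁿ → ℝ. Fix θ₀ ∈ ℝⁿ and assume: (i) ν is (Fréchet) differentiable at θ₀; (ii) for every θ in a neighborhood of θ₀, ℙ(Z θ ≥ ν θ) = 1 − α; (iii) ℙ(Z θ₀ = ν θ₀) = 0; (iv) for ℙ-almost every ω, the map θ ↦ Z θ ω is Fréchet differentiable at θ₀ with gradient ∇_θ Z(θ₀, ω) ∈ ℝⁿ, and there is an integrable function K : Ω → ℝ and a neighborhood U of θ₀ such that |Z θ ω − Z θ' ω| ≤ K(ω)·‖θ − θ'‖ for all θ, θ' ∈ U and a.e. ω; (v) for each θ ∈ U, Z θ and (Z θ − ν θ)⁺ are integrable. Then the function C(θ) = ν θ + (1/(1−α))·E[(Z θ − ν θ)⁺] is Fréchet differentiable at θ₀ and its gradient equals (1/(1−α)) · ∫_{{ω : Z θ₀ ω ≥ ν θ₀}} ∇_θ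 Z(θ₀, ω) dℙ(ω), i.e. the gradient of the CVaR is the conditional expectation E[∇_θ Z(θ₀) | Z θ₀ ≥ ν θ₀] of the gradient of the loss over the α-tail event. -/
/-!
Off the null set `{Z θ₀ = ν θ₀}` the map `θ ↦ (Z θ ω - ν θ)⁺` is differentiable at `θ₀`, with
derivative `𝟙{Z θ₀ ≥ ν θ₀} (∇Z(θ₀, ω) - ∇ν(θ₀))`, and it is Lipschitz near `θ₀` with an integrable
constant, so it may be differentiated under the integral. The resulting term
`-ℙ(Z θ₀ ≥ ν θ₀) ∇ν(θ₀) = -(1 - α) ∇ν(θ₀)` cancels, after division by `1 - α`, the derivative of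
the leading `ν θ`: the quantile's own sensitivity drops out of the gradient of the CVaR.
-/

open MeasureTheory Filter InnerProductSpace Topology

section Derivative

variable {E : Type*} [NormedAddCommGroup E] [NormedSpace ℝ E] {g : E → ℝ} {g' : E →L[ℝ] ℝ} {x : E}

theorem HasFDerivAt.max_zero_of_ne (hg : HasFDerivAt g g' x) (hx : g x ≠ 0) :
    HasFDerivAt (fun y => max (g y) 0) (if 0 ≤ g x then g' else 0) x := by
  rcases hx.lt_or_gt with hneg | hpos
  · have hzero : (fun y => max (g y) 0) =ᶠ[𝓝 x] fun _ => 0 := by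
      filter_upwards [hg.continuousAt.eventually_lt_const hneg] with y hy
      exact max_eq_right hy.le
    simpa [not_le.2 hneg] using (hasFDerivAt_const (0 : ℝ) x).congr_of_eventuallyEq hzero
  · have hid : (fun y => max (g y) 0) =ᶠ[𝓝 x] g := by
      filter_upwards [hg.continuousAt.eventually_const_lt hpos] with y hy
      exact max_eq_left hy.le
    simpa [hpos.le] using hg.congr_of_eventuallyEq hid

end Derivative

section Measurability

variable {Ω : Type*} [MeasurableSpace Ω] {μ : Measure Ω}
  {E : Type*} [NormedAddCommGroup E] [NormedSpace ℝ E]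
  {F : Type*} [NormedAddCommGroup F] [NormedSpace ℝ F]

theorem aestronglyMeasurable_apply_of_hasFDerivAt {f : E → Ω → F} {f' : Ω → E →L[ℝ] F} {x : E}
    (hf : ∀ᶠ y in 𝓝 x, AEStronglyMeasurable (f y) μ)
    (hf' : ∀ᵐ ω ∂μ, HasFDerivAt (f · ω) (f' ω) x) (v : E) :
    AEStronglyMeasurable (fun ω => f' ω v) μ := by
  have hlim : Tendsto (fun k : ℕ => x + (k : ℝ)⁻¹ • v) atTop (𝓝 x) := by
    simpa using tendsto_const_nhds.add
      (((tendsto_inv_atTop_zero (𝕜 := ℝ)).comp tendsto_natCast_atTop_atTop).smul_const v)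
  obtain ⟨N, hN⟩ := eventually_atTop.1 (hlim.eventually hf)
  refine aestronglyMeasurable_of_tendsto_ae atTop
    (f := fun k ω => ((k + N : ℕ) : ℝ) • (f (x + ((k + N : ℕ) : ℝ)⁻¹ • v) ω - f x ω))
    (fun k => ((hN (k + N) le_add_self).sub hf.self_of_nhds).const_smul _) ?_
  filter_upwards [hf'] with ω hω
  exact ((hω.lim_real v).comp tendsto_natCast_atTop_atTop).comp (tendsto_add_atTop_nat N)

end Measurability

section Gradient

variable {Ω : Type*} [MeasurableSpace Ω] {μ : Measure Ω}
  {E : Type*} [NormedAddCommGroup E] [InnerProductSpace ℝ E] [FiniteDimensional ℝ E]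

theorem aestronglyMeasurable_of_hasGradientAt {f : E → Ω → ℝ} {g : Ω → E} {x : E}
    (hf : ∀ᶠ y in 𝓝 x, AEStronglyMeasurable (f y) μ)
    (hg : ∀ᵐ ω ∂μ, HasGradientAt (f · ω) (g ω) x) :
    AEStronglyMeasurable g μ := by
  let b := stdOrthonormalBasis ℝ E
  have hcoord (i) : AEStronglyMeasurable (fun ω => ⟪b i, g ω⟫_ℝ) μ := by
    simpa [real_inner_comm] using
      aestronglyMeasurable_apply_of_hasFDerivAt hf (hg.mono fun _ h => h.hasFDerivAt) (b i)
  simpa only [b.sum_repr'] using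
    Finset.univ.aestronglyMeasurable_fun_sum fun i _ => (hcoord i).smul_const (b i)

theorem integrable_of_hasGradientAt_of_lip {f : E → Ω → ℝ} {g : Ω → E} {x : E} {U : Set E}
    {K : Ω → ℝ} (hf : ∀ᶠ y in 𝓝 x, AEStronglyMeasurable (f y) μ)
    (hg : ∀ᵐ ω ∂μ, HasGradientAt (f · ω) (g ω) x) (hU : U ∈ 𝓝 x) (hK : Integrable K μ)
    (hlip : ∀ᵐ ω ∂μ, ∀ y ∈ U, |f y ω - f x ω| ≤ K ω * ‖y - x‖) :
    Integrable g μ := by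
  refine hK.abs.mono' (aestronglyMeasurable_of_hasGradientAt hf hg) ?_
  filter_upwards [hg, hlip] with ω hgω hlipω
  rw [← (toDual ℝ E).norm_map]
  refine hgω.hasFDerivAt.le_of_lip' (abs_nonneg _) ?_
  filter_upwards [hU] with y hy
  exact (hlipω y hy).trans (mul_le_mul_of_nonneg_right (le_abs_self _) (norm_nonneg _))

end Gradient

section PositivePart

variable {Ω : Type*} [MeasurableSpace Ω] {μ : Measure Ω}
  {E : Type*} [NormedAddCommGroup E] [NormedSpace ℝ E]

theorem hasFDerivAt_integral_max_zero {F : E → Ω → ℝ} {F' : Ω → E →L[ℝ] ℝ} {x₀ : E} {s : Set E}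
    {bound : Ω → ℝ} (hs : s ∈ 𝓝 x₀) (hF_meas : ∀ x ∈ s, AEStronglyMeasurable (F x) μ)
    (hF_int : Integrable (F x₀) μ) (hF'_meas : AEStronglyMeasurable F' μ)
    (h_lip : ∀ᵐ ω ∂μ, ∀ x ∈ s, |F x ω - F x₀ ω| ≤ bound ω * ‖x - x₀‖)
    (hbound : Integrable bound μ) (h_diff : ∀ᵐ ω ∂μ, HasFDerivAt (F · ω) (F' ω) x₀)
    (h_ne : ∀ᵐ ω ∂μ, F x₀ ω ≠ 0) :
    HasFDerivAt (fun x => ∫ ω, max (F x ω) 0 ∂μ) (∫ ω in {ω | 0 ≤ F x₀ ω}, F' ω ∂μ) x₀ := by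
  have hT : NullMeasurableSet {ω | 0 ≤ F x₀ ω} μ :=
    aestronglyMeasurable_const.nullMeasurableSet_le (hF_meas x₀ (mem_of_mem_nhds hs))
  rw [← integral_indicator₀ hT]
  refine (hasFDerivAt_integral_of_dominated_loc_of_lip' hs
    (fun x hx => (hF_meas x hx).sup aestronglyMeasurable_const) hF_int.pos_part
    (hF'_meas.indicator₀ hT) ?_ hbound ?_).2
  · filter_upwards [h_lip] with ω hω x hx
    exact (abs_max_sub_max_le_abs _ _ _).trans (hω x hx)
  · filter_upwards [h_diff, h_ne] with ω hω hne
    simpa [Set.indicator_apply] using hω.max_zero_of_ne hne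

end PositivePart

section Threshold

variable {Ω : Type*} [MeasurableSpace Ω] {μ : Measure Ω} [IsFiniteMeasure μ]
  {E : Type*} [NormedAddCommGroup E] [InnerProductSpace ℝ E] [CompleteSpace E]

theorem hasFDerivAt_integral_max_sub_zero {Z : E → Ω → ℝ} {Z' : Ω → E} {ν : E → ℝ}
    {ν' : E →L[ℝ] ℝ} {x₀ : E} {U : Set E} {K : Ω → ℝ} (hν : HasFDerivAt ν ν' x₀)
    (hZ_meas : ∀ᶠ x in 𝓝 x₀, AEStronglyMeasurable (Z x) μ) (hZ_int : Integrable (Z x₀) μ)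
    (hZ' : ∀ᵐ ω ∂μ, HasGradientAt (Z · ω) (Z' ω) x₀) (hZ'_int : Integrable Z' μ)
    (hU : U ∈ 𝓝 x₀) (hK : Integrable K μ)
    (hlip : ∀ᵐ ω ∂μ, ∀ x ∈ U, |Z x ω - Z x₀ ω| ≤ K ω * ‖x - x₀‖)
    (hne : ∀ᵐ ω ∂μ, Z x₀ ω ≠ ν x₀) :
    HasFDerivAt (fun x => ∫ ω, max (Z x ω - ν x) 0 ∂μ)
      (toDual ℝ E (∫ ω in {ω | ν x₀ ≤ Z x₀ ω}, Z' ω ∂μ) - μ.real {ω | ν x₀ ≤ Z x₀ ω} • ν') x₀ := by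
  obtain ⟨c, -, hc⟩ := hν.isBigO_sub.exists_pos
  have hs : U ∩ {x | AEStronglyMeasurable (Z x) μ} ∩ {x | ‖ν x - ν x₀‖ ≤ c * ‖x - x₀‖} ∈ 𝓝 x₀ :=
    inter_mem (inter_mem hU hZ_meas) hc.bound
  have hderiv := hasFDerivAt_integral_max_zero (μ := μ) (F := fun x ω => Z x ω - ν x)
    (F' := fun ω => toDual ℝ E (Z' ω) - ν') (bound := fun ω => K ω + c) hs
    (fun x hx => hx.1.2.sub aestronglyMeasurable_const) (hZ_int.sub (integrable_const _))
    (((toDual ℝ E).continuous.comp_aestronglyMeasurable hZ'_int.1).sub aestronglyMeasurable_const)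
    ?_ (hK.add (integrable_const c)) ?_ (by simpa [sub_eq_zero] using hne)
  · let L := (toDual ℝ E).toLinearIsometry.toContinuousLinearMap
    have hLZ'_int : Integrable (fun ω => toDual ℝ E (Z' ω)) μ := L.integrable_comp hZ'_int
    convert hderiv using 1
    simp only [sub_nonneg]
    rw [integral_sub hLZ'_int.integrableOn (integrable_const _), setIntegral_const]
    congr 1
    exact (L.integral_comp_commSL (by simp) hZ'_int.integrableOn).symm
  · filter_upwards [hlip] with ω hω x hx
    calc |Z x ω - ν x - (Z x₀ ω - ν x₀)| ≤ |Z x ω - Z x₀ ω| + |ν x - ν x₀| := by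
          rw [show Z x ω - ν x - (Z x₀ ω - ν x₀) = (Z x ω - Z x₀ ω) - (ν x - ν x₀) by ring]
          exact abs_sub _ _
      _ ≤ (K ω + c) * ‖x - x₀‖ := by rw [add_mul]; exact add_le_add (hω x hx.1.1) hx.2
  · filter_upwards [hZ'] with ω hω using hω.hasFDerivAt.sub hν

end Threshold

theorem cvar_hasGradientAt_general
    {Ω : Type*} [MeasurableSpace Ω] (ℙ : Measure Ω) [IsProbabilityMeasure ℙ]
    (α : ℝ) (hα : α ∈ Set.Ioo (0 : ℝ) 1) (n : ℕ)
    (Z : EuclideanSpace ℝ (Fin n) → Ω → ℝ) (ν : EuclideanSpace ℝ (Fin n) → ℝ)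
    (θ₀ : EuclideanSpace ℝ (Fin n)) (Z' : Ω → EuclideanSpace ℝ (Fin n))
    (hν : DifferentiableAt ℝ ν θ₀)
    (htail : ∀ᶠ θ in nhds θ₀, ℙ {ω | Z θ ω ≥ ν θ} = ENNReal.ofReal (1 - α))
    (hzero : ℙ {ω | Z θ₀ ω = ν θ₀} = 0)
    (hgrad : ∀ᵐ ω ∂ℙ, HasGradientAt (fun θ => Z θ ω) (Z' ω) θ₀)
    (hlip : ∃ K : Ω → ℝ, Integrable K ℙ ∧ ∃ U ∈ nhds θ₀,
      ∀ᵐ ω ∂ℙ, ∀ θ ∈ U, ∀ θ' ∈ U, |Z θ ω - Z θ' ω| ≤ K ω * ‖θ - θ'‖)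
    (hint : ∀ᶠ θ in nhds θ₀,
      Integrable (Z θ) ℙ ∧ Integrable (fun ω => max (Z θ ω - ν θ) 0) ℙ) :
    HasGradientAt
      (fun θ => ν θ + (1 - α)⁻¹ * ∫ ω, max (Z θ ω - ν θ) 0 ∂ℙ)
      ((1 - α)⁻¹ • ∫ ω in {ω | Z θ₀ ω ≥ ν θ₀}, Z' ω ∂ℙ) θ₀ := by
  obtain ⟨K, hK, U, hU, hlipK⟩ := hlip
  have hlip₀ : ∀ᵐ ω ∂ℙ, ∀ θ ∈ U, |Z θ ω - Z θ₀ ω| ≤ K ω * ‖θ - θ₀‖ := by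
    filter_upwards [hlipK] with ω hω θ hθ using hω θ hθ θ₀ (mem_of_mem_nhds hU)
  have hZ_meas : ∀ᶠ θ in 𝓝 θ₀, AEStronglyMeasurable (Z θ) ℙ := hint.mono fun _ h => h.1.1
  have hZ'_int : Integrable Z' ℙ := integrable_of_hasGradientAt_of_lip hZ_meas hgrad hU hK hlip₀
  have hne : ∀ᵐ ω ∂ℙ, Z θ₀ ω ≠ ν θ₀ := measure_eq_zero_iff_ae_notMem.1 hzero
  have h1α : 0 < 1 - α := sub_pos.2 hα.2
  have htail₀ : ℙ.real {ω | ν θ₀ ≤ Z θ₀ ω} = 1 - α := by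
    rw [measureReal_def, htail.self_of_nhds, ENNReal.toReal_ofReal h1α.le]
  have hC := hν.hasFDerivAt.add ((hasFDerivAt_integral_max_sub_zero hν.hasFDerivAt
    hZ_meas hint.self_of_nhds.1 hgrad hZ'_int hU hK hlip₀ hne).const_mul (1 - α)⁻¹)
  refine hC.congr_fderiv ?_
  rw [htail₀, smul_sub, smul_smul, inv_mul_cancel₀ h1α.ne', one_smul, add_sub_cancel, map_smul]

/-- **CVaR gradient theorem (vector parameter).**
With parameter space `ℝⁿ`, if `ν` is Fréchet differentiable at `θ₀`,
`ℙ(Z θ ≥ ν θ) = 1 - α` near `θ₀`, `ℙ(Z θ₀ = ν θ₀) = 0`, `θ ↦ Z θ ω` has a.s.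
a gradient `Z' ω` at `θ₀` and is a.s. Lipschitz near `θ₀` with integrable
constant, and the relevant integrability holds, then the CVaR
`C θ = ν θ + (1/(1-α)) E[(Z θ - ν θ)⁺]` has at `θ₀` the gradient
`(1/(1-α)) ∫_{Z θ₀ ≥ ν θ₀} Z' dℙ = E[∇_θ Z(θ₀) ∣ Z θ₀ ≥ ν θ₀]`. -/
theorem cvar_hasGradientAt
    {Ω : Type*} [MeasurableSpace Ω] (ℙ : Measure Ω) [IsProbabilityMeasure ℙ]
    (α : ℝ) (hα : α ∈ Set.Ioo (0 : ℝ) 1) (n : ℕ) (hn : 0 < n)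
    (Z : EuclideanSpace ℝ (Fin n) → Ω → ℝ) (ν : EuclideanSpace ℝ (Fin n) → ℝ)
    (θ₀ : EuclideanSpace ℝ (Fin n)) (Z' : Ω → EuclideanSpace ℝ (Fin n))
    (hν : DifferentiableAt ℝ ν θ₀)
    (htail : ∀ᶠ θ in nhds θ₀, ℙ {ω | Z θ ω ≥ ν θ} = ENNReal.ofReal (1 - α))
    (hzero : ℙ {ω | Z θ₀ ω = ν θ₀} = 0)
    (hgrad : ∀ᵐ ω ∂ℙ, HasGradientAt (fun θ => Z θ ω) (Z' ω) θ₀)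
    (hlip : ∃ K : Ω → ℝ, Integrable K ℙ ∧ ∃ U ∈ nhds θ₀,
      ∀ᵐ ω ∂ℙ, ∀ θ ∈ U, ∀ θ' ∈ U, |Z θ ω - Z θ' ω| ≤ K ω * ‖θ - θ'‖)
    (hint : ∀ᶠ θ in nhds θ₀,
      Integrable (Z θ) ℙ ∧ Integrable (fun ω => max (Z θ ω - ν θ) 0) ℙ) :
    HasGradientAt
      (fun θ => ν θ + (1 - α)⁻¹ * ∫ ω, max (Z θ ω - ν θ) 0 ∂ℙ)
      ((1 - α)⁻¹ • ∫ ω in {ω | Z θ₀ ω ≥ ν θ₀}, Z' ω ∂ℙ) θ₀ :=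
  cvar_hasGradientAt_general ℙ α hα n Z ν θ₀ Z' hν htail hzero hgrad hlip hint
end
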